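/- arXiv:1302.3030 — 7 statements merged into one kernel-verified Lean document; each statement's English description precedes it below -/
import Mathlib

section
/- (Le Cam's lemma.) Let X be an observation from a distribution P_θ with θ belonging to a finite parameter set Θ = {θ_0, θ_1, …, θ_D}, let L ≥ 0 be a loss function on actions and parameters, let l_min = min_{1 ≤ i ≤ D} inf_t [ L(t, θ_0) + L(t, θ_i) ], and let P̄ = (1/D) Σ_{i=1}^D P_{θ_i}. Then for any estimator T = T(X), sup_{θ ∈ Θ} E_{X|θ} L(T, θ) ≥ (1/2) · l_min · ‖P_{θ_0} ∧ P̄‖. -/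
/-!
Integrate the pointwise bound `l_min ≤ L(T, θ₀) + min_{i ≥ 1} L(T, θᵢ)` against the common part
`P_{θ₀} ∧ P̄`: the first summand is then bounded by its `P_{θ₀}`-integral and the second by its
`P̄`-integral, which is an average of risks and so at most the largest one. Hence
`l_min ‖P_{θ₀} ∧ P̄‖` is at most the sum of two risks, i.e. at most twice the maximal risk.
-/

open MeasureTheory
open scoped ENNReal NNReal BigOperators

noncomputable section

/-- The total variation affinity `‖P ∧ Q‖ = ∫ min(p, q) dμ`, expressed intrinsically as the
total mass of the lattice infimum of the two measures. -/
def affinity {Ω : Type*} [MeasurableSpace Ω] (P Q : Measure Ω) : ℝ :=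
  ((P ⊓ Q) Set.univ).toReal

theorem ENNReal.inv_card_mul_sum_le_sup {ι : Type*} (s : Finset ι) (a : ι → ℝ≥0∞) :
    (s.card : ℝ≥0∞)⁻¹ * ∑ i ∈ s, a i ≤ s.sup a := by
  rcases s.eq_empty_or_nonempty with rfl | hs
  · simp
  have hcard : (s.card : ℝ≥0∞) ≠ 0 := by simpa using hs.ne_empty
  calc (s.card : ℝ≥0∞)⁻¹ * ∑ i ∈ s, a i ≤ (s.card : ℝ≥0∞)⁻¹ * (s.card * s.sup a) := by
        gcongr
        simpa [nsmul_eq_mul] using Finset.sum_le_card_nsmul s a _ fun i hi => Finset.le_sup hi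
    _ = s.sup a := ENNReal.inv_mul_cancel_left hcard (ENNReal.natCast_ne_top _)

namespace LeCam

variable {Ω ι : Type*} [MeasurableSpace Ω]

theorem mul_inf_measure_univ_le_lintegral_add {μ ν : Measure Ω} {f g : Ω → ℝ≥0∞}
    (hf : Measurable f) {c : ℝ≥0∞} (hfg : ∀ x, c ≤ f x + g x) :
    c * (μ ⊓ ν) Set.univ ≤ ∫⁻ x, f x ∂μ + ∫⁻ x, g x ∂ν :=
  calc c * (μ ⊓ ν) Set.univ = ∫⁻ _, c ∂(μ ⊓ ν) := (lintegral_const c).symm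
    _ ≤ ∫⁻ x, f x + g x ∂(μ ⊓ ν) := lintegral_mono hfg
    _ = ∫⁻ x, f x ∂(μ ⊓ ν) + ∫⁻ x, g x ∂(μ ⊓ ν) := lintegral_add_left hf g
    _ ≤ ∫⁻ x, f x ∂μ + ∫⁻ x, g x ∂ν :=
      add_le_add (lintegral_mono' inf_le_left le_rfl) (lintegral_mono' inf_le_right le_rfl)

theorem lintegral_iInf_average_le_sup (P : ι → Measure Ω) (s : Finset ι)
    (g : ι → Ω → ℝ≥0∞) :
    ∫⁻ x, ⨅ i ∈ s, g i x ∂((s.card : ℝ≥0∞)⁻¹ • ∑ i ∈ s, P i) ≤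
      s.sup fun i => ∫⁻ x, g i x ∂(P i) := by
  rw [lintegral_smul_measure, lintegral_finsetSum_measure, smul_eq_mul]
  calc (s.card : ℝ≥0∞)⁻¹ * ∑ i ∈ s, ∫⁻ x, ⨅ j ∈ s, g j x ∂(P i)
      ≤ (s.card : ℝ≥0∞)⁻¹ * ∑ i ∈ s, ∫⁻ x, g i x ∂(P i) := by
        gcongr with i hi x
        exact biInf_le _ hi
    _ ≤ _ := ENNReal.inv_card_mul_sum_le_sup s _

theorem mul_inf_average_univ_le (μ : Measure Ω) (P : ι → Measure Ω) (s : Finset ι)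
    {f : Ω → ℝ≥0∞} (hf : Measurable f) (g : ι → Ω → ℝ≥0∞) {c : ℝ≥0∞}
    (hfg : ∀ i ∈ s, ∀ x, c ≤ f x + g i x) :
    c * (μ ⊓ (s.card : ℝ≥0∞)⁻¹ • ∑ i ∈ s, P i) Set.univ ≤
      ∫⁻ x, f x ∂μ + s.sup fun i => ∫⁻ x, g i x ∂(P i) := by
  refine (mul_inf_measure_univ_le_lintegral_add hf fun x => ?_).trans
    (add_le_add_right (lintegral_iInf_average_le_sup P s g) _)
  simp only [ENNReal.add_iInf]
  exact le_iInf₂ fun i hi => hfg i hi x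

end LeCam

open LeCam in
theorem le_cam_lemma_general {Ω 𝒜 : Type*} [MeasurableSpace Ω] [MeasurableSpace 𝒜]
    (D : ℕ)
    (P : Fin (D + 1) → Measure Ω)
    (L : 𝒜 → Fin (D + 1) → ℝ)
    (hLmeas : ∀ i, Measurable fun t => L t i)
    (T : Ω → 𝒜) (hT : Measurable T)
    (lmin : ℝ) (hlmin : ∀ i : Fin (D + 1), i ≠ 0 → ∀ t : 𝒜, lmin ≤ L t 0 + L t i) :
    ∃ θ : Fin (D + 1),
      ENNReal.ofReal
          (1 / 2 * lmin *
            affinity (P 0)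
              (((D : ℝ≥0∞))⁻¹ • ∑ i ∈ Finset.univ.filter (fun i : Fin (D + 1) => i ≠ 0), P i)) ≤
        ∫⁻ x, ENNReal.ofReal (L (T x) θ) ∂(P θ) := by
  set s := Finset.univ.filter fun i : Fin (D + 1) => i ≠ 0
  set risk : Fin (D + 1) → ℝ≥0∞ := fun θ => ∫⁻ x, ENNReal.ofReal (L (T x) θ) ∂(P θ)
  obtain ⟨θ, -, hθ⟩ := Finset.univ.exists_mem_eq_sup Finset.univ_nonempty risk
  have hcard : s.card = D := by simp [s, Finset.filter_ne']
  have hbound := mul_inf_average_univ_le (P 0) P s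
    (ENNReal.measurable_ofReal.comp ((hLmeas 0).comp hT))
    (fun i x => ENNReal.ofReal (L (T x) i)) (c := ENNReal.ofReal lmin) fun i hi x =>
      (ENNReal.ofReal_le_ofReal (hlmin i (Finset.mem_filter.1 hi).2 (T x))).trans
        ENNReal.ofReal_add_le
  rw [hcard] at hbound
  have hsum : risk 0 + s.sup risk ≤ 2 * risk θ := by
    rw [two_mul, ← hθ]
    exact add_le_add (Finset.le_sup (Finset.mem_univ 0)) (Finset.sup_mono s.subset_univ)
  refine ⟨θ, ?_⟩
  calc ENNReal.ofReal (1 / 2 * lmin * affinity (P 0) _)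
      ≤ 2⁻¹ * (ENNReal.ofReal lmin * (P 0 ⊓ (D : ℝ≥0∞)⁻¹ • ∑ i ∈ s, P i) Set.univ) := by
        rw [affinity, ENNReal.ofReal_mul' ENNReal.toReal_nonneg, ENNReal.ofReal_mul (by norm_num),
          mul_assoc, one_div, ENNReal.ofReal_inv_of_pos two_pos, ENNReal.ofReal_ofNat]
        gcongr
        exact ENNReal.ofReal_toReal_le
    _ ≤ 2⁻¹ * (2 * risk θ) := by gcongr 2⁻¹ * ?_; exact hbound.trans hsum
    _ = risk θ := ENNReal.inv_mul_cancel_left two_ne_zero ENNReal.ofNat_ne_top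

/-- **Le Cam's lemma.**  Let `X ∼ P_θ`, `θ ∈ Θ = {θ_0, θ_1, …, θ_D}`, let `L ≥ 0` be a loss
function, `l_min ≤ L(t, θ_0) + L(t, θ_i)` for all actions `t` and all `i ≥ 1`, and let
`P̄ = D⁻¹ Σ_{i=1}^D P_{θ_i}`.  Then for any estimator `T`,
`sup_θ E_{X|θ} L(T, θ) ≥ (1/2) l_min ‖P_{θ_0} ∧ P̄‖` (the supremum over the finite set `Θ`
being attained at some `θ`). -/
theorem le_cam_lemma {Ω 𝒜 : Type*} [MeasurableSpace Ω] [MeasurableSpace 𝒜]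
    (D : ℕ) (hD : 1 ≤ D)
    (P : Fin (D + 1) → Measure Ω) (hP : ∀ i, IsProbabilityMeasure (P i))
    (L : 𝒜 → Fin (D + 1) → ℝ) (hL0 : ∀ t i, 0 ≤ L t i)
    (hLmeas : ∀ i, Measurable fun t => L t i)
    (T : Ω → 𝒜) (hT : Measurable T)
    (lmin : ℝ) (hlmin : ∀ i : Fin (D + 1), i ≠ 0 → ∀ t : 𝒜, lmin ≤ L t 0 + L t i) :
    ∃ θ : Fin (D + 1),
      ENNReal.ofReal
          (1 / 2 * lmin *
            affinity (P 0)
              (((D : ℝ≥0∞))⁻¹ • ∑ i ∈ Finset.univ.filter (fun i : Fin (D + 1) => i ≠ 0), P i)) ≤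
        ∫⁻ x, ENNReal.ofReal (L (T x) θ) ∂(P θ) :=
  le_cam_lemma_general D P L hLmeas T hT lmin hlmin

end
end

section
/- In the sparse covariance lower-bound construction, for any θ, θ' ∈ Θ with H(γ(θ), γ(θ')) ≥ 1, the spectral norm satisfies |||Σ(θ) − Σ(θ')|||^2 / H(γ(θ), γ(θ')) ≥ (k ε_{n,p})^2 / p. Consequently α = min_{ H(γ(θ),γ(θ')) ≥ 1 } |||Σ(θ) − Σ(θ')|||^2 / H(γ(θ), γ(θ')) ≥ (k ε_{n,p})^2 / p. -/
open MeasureTheory Real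
open scoped ENNReal NNReal BigOperators

noncomputable section

/-- The vector `ℓ_w` norm on `ℝ^p`, for `1 ≤ w ≤ ∞`. -/
def vecLwNorm {p : ℕ} (w : ℝ≥0∞) (x : Fin p → ℝ) : ℝ :=
  if w = ∞ then ⨆ i, |x i| else (∑ i, |x i| ^ w.toReal) ^ (1 / w.toReal)

/-- The matrix `ℓ_w` operator norm `|||A|||_w = sup_{‖x‖_w = 1} ‖Ax‖_w`. -/
def lwOpNorm {p : ℕ} (w : ℝ≥0∞) (A : Matrix (Fin p) (Fin p) ℝ) : ℝ :=
  sSup {r : ℝ | ∃ x : Fin p → ℝ, vecLwNorm w x = 1 ∧ r = vecLwNorm w (A.mulVec x)}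

/-- The spectral norm (matrix `ℓ_2` operator norm). -/
def specNorm {p : ℕ} (A : Matrix (Fin p) (Fin p) ℝ) : ℝ := lwOpNorm 2 A

/-- The Hamming distance on `{0,1}^r`. -/
def hamming {r : ℕ} (a b : Fin r → Bool) : ℕ :=
  (Finset.univ.filter fun i => a i ≠ b i).card

def boolToReal (b : Bool) : ℝ := if b then 1 else 0

/-- The 0/1 row vector in `ℝ^p` associated with `b ∈ {0,1}^p`. -/
def rowOf {p : ℕ} (b : Fin p → Bool) : Fin p → ℝ := fun j => boolToReal (b j)

/-- `b ∈ B`: the first `p - r` coordinates vanish (`r = ⌊p/2⌋`) and exactly `k` of the last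
`r` coordinates equal `1`. -/
def MemB (p k : ℕ) (b : Fin p → Bool) : Prop :=
  (∀ j : Fin p, (j : ℕ) < p - p / 2 → b j = false) ∧
    (Finset.univ.filter fun j => b j = true).card = k

/-- `λ ∈ Λ ⊆ B^r`: every row belongs to `B` and every column sum is at most `2k`. -/
def MemLam (p k : ℕ) (lam : Fin (p / 2) → Fin p → Bool) : Prop :=
  (∀ m, MemB p k (lam m)) ∧
    ∀ j : Fin p, (Finset.univ.filter fun m => lam m j = true).card ≤ 2 * k

/-- The symmetric matrix `A_m(λ_m)` whose `m`-th row is `λ_m`, `m`-th column is `λ_mᵀ`, and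
which vanishes elsewhere. -/
def Amat {p : ℕ} (m : Fin p) (lam : Fin p → ℝ) : Matrix (Fin p) (Fin p) ℝ :=
  Matrix.of fun i j => if i = m then lam j else if j = m then lam i else 0

/-- The covariance matrix `Σ(θ) = I_p + ε Σ_{m=1}^r γ_m A_m(λ_m)` of the lower-bound
construction. -/
def SigmaTheta (p : ℕ) (ε : ℝ) (θ : (Fin (p / 2) → Bool) × (Fin (p / 2) → Fin p → Bool)) :
    Matrix (Fin p) (Fin p) ℝ :=
  1 + ε • ∑ m : Fin (p / 2),
      boolToReal (θ.1 m) • Amat (Fin.castLE (Nat.div_le_self p 2) m) (rowOf (θ.2 m))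

/-!
Test `D = Σ(θ) - Σ(θ')` against the unit vector `x` supported on the first `r` coordinates with
`x_m = (γ_m - γ'_m) / √H`. Every row `λ_m ∈ B` vanishes on those coordinates, so
`A_m(λ_m) x = x_m λ_m`, and the entries of `D x` add up to `ε k ∑_m (γ_m - γ'_m) x_m = ε k √H`.
Cauchy–Schwarz against the all-ones vector then gives
`|||D|||² ≥ ‖D x‖² ≥ (ε k √H)² / p`.
-/

open scoped Matrix

lemma vecLwNorm_two_eq_sqrt_sum_sq {p : ℕ} (x : Fin p → ℝ) :
    vecLwNorm 2 x = √(∑ i, x i ^ 2) := by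
  have h2 : (2 : ℝ≥0∞).toReal = ((2 : ℕ) : ℝ) := by norm_num
  simp only [vecLwNorm, if_neg ENNReal.ofNat_ne_top, h2, Real.rpow_natCast, sq_abs]
  rw [Real.sqrt_eq_rpow, Nat.cast_ofNat]

lemma vecLwNorm_two_mulVec_le {p : ℕ} (A : Matrix (Fin p) (Fin p) ℝ) (x : Fin p → ℝ) :
    vecLwNorm 2 (A *ᵥ x) ≤ √(∑ i, ∑ j, A i j ^ 2) * vecLwNorm 2 x := by
  rw [vecLwNorm_two_eq_sqrt_sum_sq, vecLwNorm_two_eq_sqrt_sum_sq, ← Real.sqrt_mul (by positivity),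
    Finset.sum_mul]
  gcongr with i
  exact Finset.sum_mul_sq_le_sq_mul_sq Finset.univ (A i) x

lemma vecLwNorm_two_mulVec_le_specNorm {p : ℕ} (A : Matrix (Fin p) (Fin p) ℝ) {x : Fin p → ℝ}
    (hx : vecLwNorm 2 x = 1) : vecLwNorm 2 (A *ᵥ x) ≤ specNorm A := by
  refine le_csSup ⟨√(∑ i, ∑ j, A i j ^ 2), ?_⟩ ⟨x, hx, rfl⟩
  rintro r ⟨y, hy, rfl⟩
  simpa [hy] using vecLwNorm_two_mulVec_le A y

lemma sq_sum_mulVec_div_le_specNorm_sq {p : ℕ} (A : Matrix (Fin p) (Fin p) ℝ) {x : Fin p → ℝ}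
    (hx : vecLwNorm 2 x = 1) : (∑ j, (A *ᵥ x) j) ^ 2 / p ≤ specNorm A ^ 2 := by
  have hAx := vecLwNorm_two_mulVec_le_specNorm A hx
  rw [vecLwNorm_two_eq_sqrt_sum_sq] at hAx
  calc (∑ j, (A *ᵥ x) j) ^ 2 / p ≤ ∑ j, (A *ᵥ x) j ^ 2 := by
        refine div_le_of_le_mul₀ (Nat.cast_nonneg p) (by positivity) ?_
        simpa [mul_comm] using sq_sum_le_card_mul_sum_sq (s := Finset.univ) (f := A *ᵥ x)
    _ = √(∑ j, (A *ᵥ x) j ^ 2) ^ 2 := (Real.sq_sqrt (by positivity)).symm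
    _ ≤ specNorm A ^ 2 := by gcongr

lemma Amat_mulVec_of_mul_eq_zero {p : ℕ} (m : Fin p) {b x : Fin p → ℝ}
    (hbx : ∀ i, b i * x i = 0) : Amat m b *ᵥ x = x m • b := by
  ext j
  simp only [Amat, Matrix.mulVec, dotProduct, Matrix.of_apply, Pi.smul_apply, smul_eq_mul]
  split_ifs with hj
  · simp [hj, hbx, mul_comm (x m)]
  · simp [mul_comm]

lemma sum_rowOf_of_memB {p k : ℕ} {b : Fin p → Bool} (hb : MemB p k b) :
    ∑ j, rowOf b j = k := by
  simp only [rowOf, boolToReal, Finset.sum_boole, hb.2]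

lemma sum_sq_boolToReal_sub_eq_hamming {r : ℕ} (a b : Fin r → Bool) :
    ∑ i, (boolToReal (a i) - boolToReal (b i)) ^ 2 = hamming a b := by
  rw [hamming, ← Finset.sum_boole]
  refine Finset.sum_congr rfl fun i _ => ?_
  cases a i <;> cases b i <;> norm_num [boolToReal]

lemma vecLwNorm_two_extend_castLE {r p : ℕ} (h : r ≤ p) (d : Fin r → ℝ) :
    vecLwNorm 2 (Function.extend (Fin.castLE h) d 0) = √(∑ m, d m ^ 2) := by
  rw [vecLwNorm_two_eq_sqrt_sum_sq]
  congr 1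
  refine (Fintype.sum_of_injective _ (Fin.castLE_injective h) _ _ (fun j hj => ?_)
    (fun m => by rw [(Fin.castLE_injective h).extend_apply])).symm
  rw [Function.extend_apply' _ _ _ hj, Pi.zero_apply, sq, zero_mul]

lemma rowOf_mul_extend_castLE_eq_zero {p k : ℕ} {b : Fin p → Bool} (hb : MemB p k b)
    (d : Fin (p / 2) → ℝ) (j : Fin p) :
    rowOf b j * Function.extend (Fin.castLE (Nat.div_le_self p 2)) d 0 j = 0 := by
  by_cases hj : ∃ m, Fin.castLE (Nat.div_le_self p 2) m = j
  · obtain ⟨m, rfl⟩ := hj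
    have hbm : b (Fin.castLE (Nat.div_le_self p 2) m) = false :=
      hb.1 _ (m.isLt.trans_le (by omega))
    simp [rowOf, boolToReal, hbm]
  · rw [Function.extend_apply' _ _ _ hj, Pi.zero_apply, mul_zero]

lemma sum_SigmaTheta_mulVec {p k : ℕ} (ε : ℝ)
    (θ : (Fin (p / 2) → Bool) × (Fin (p / 2) → Fin p → Bool)) (hθ : ∀ m, MemB p k (θ.2 m))
    {x : Fin p → ℝ} (hx : ∀ m j, rowOf (θ.2 m) j * x j = 0) :
    ∑ j, (SigmaTheta p ε θ *ᵥ x) j =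
      ∑ j, x j + ε * k * ∑ m, boolToReal (θ.1 m) * x (Fin.castLE (Nat.div_le_self p 2) m) := by
  simp only [SigmaTheta, Matrix.add_mulVec, Matrix.one_mulVec, Matrix.smul_mulVec,
    Matrix.sum_mulVec, Amat_mulVec_of_mul_eq_zero _ (hx _ ·), Pi.add_apply, Pi.smul_apply,
    Finset.sum_apply, smul_eq_mul, Finset.sum_add_distrib]
  rw [← Finset.mul_sum, Finset.sum_comm]
  simp only [← Finset.mul_sum, sum_rowOf_of_memB (hθ _)]
  simp only [Finset.mul_sum]
  congr 1
  exact Finset.sum_congr rfl fun m _ => by ring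

lemma sum_SigmaTheta_sub_mulVec_extend_castLE {p k : ℕ} (ε : ℝ)
    (θ θ' : (Fin (p / 2) → Bool) × (Fin (p / 2) → Fin p → Bool))
    (hθ : ∀ m, MemB p k (θ.2 m)) (hθ' : ∀ m, MemB p k (θ'.2 m)) (d : Fin (p / 2) → ℝ) :
    ∑ j, ((SigmaTheta p ε θ - SigmaTheta p ε θ') *ᵥ
        Function.extend (Fin.castLE (Nat.div_le_self p 2)) d 0) j =
      ε * k * ∑ m, (boolToReal (θ.1 m) - boolToReal (θ'.1 m)) * d m := by
  simp only [Matrix.sub_mulVec, Pi.sub_apply, Finset.sum_sub_distrib]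
  rw [sum_SigmaTheta_mulVec ε θ hθ (fun m => rowOf_mul_extend_castLE_eq_zero (hθ m) d),
    sum_SigmaTheta_mulVec ε θ' hθ' (fun m => rowOf_mul_extend_castLE_eq_zero (hθ' m) d),
    add_sub_add_left_eq_sub, ← mul_sub, ← Finset.sum_sub_distrib]
  simp only [(Fin.castLE_injective _).extend_apply, sub_mul]

theorem per_comparison_loss_bound_general (p k : ℕ) (ε : ℝ)
    (θ θ' : (Fin (p / 2) → Bool) × (Fin (p / 2) → Fin p → Bool))
    (hθ : MemLam p k θ.2) (hθ' : MemLam p k θ'.2)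
    (hH : 1 ≤ hamming θ.1 θ'.1) :
    ((k : ℝ) * ε) ^ 2 / p ≤
      specNorm (SigmaTheta p ε θ - SigmaTheta p ε θ') ^ 2 / hamming θ.1 θ'.1 := by
  have hH_pos : (0 : ℝ) < hamming θ.1 θ'.1 := by exact_mod_cast hH
  set H : ℝ := (hamming θ.1 θ'.1 : ℝ)
  set δ : Fin (p / 2) → ℝ := fun m => boolToReal (θ.1 m) - boolToReal (θ'.1 m)
  have hδ : ∑ m, δ m ^ 2 = H := sum_sq_boolToReal_sub_eq_hamming θ.1 θ'.1
  set x : Fin p → ℝ := Function.extend (Fin.castLE (Nat.div_le_self p 2)) (fun m => δ m / √H) 0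
  have hx_unit : vecLwNorm 2 x = 1 := by
    simp only [x, vecLwNorm_two_extend_castLE, div_pow, Real.sq_sqrt hH_pos.le, ← Finset.sum_div,
      hδ, div_self hH_pos.ne', Real.sqrt_one]
  have hx_sum : ∑ j, ((SigmaTheta p ε θ - SigmaTheta p ε θ') *ᵥ x) j = k * ε * √H := by
    have hδ_δ : ∑ m, δ m * (δ m / √H) = √H := by
      simp only [mul_div_assoc', ← sq, ← Finset.sum_div, hδ, Real.div_sqrt]
    rw [sum_SigmaTheta_sub_mulVec_extend_castLE ε θ θ' hθ.1 hθ'.1, hδ_δ, mul_comm ε]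
  have key := sq_sum_mulVec_div_le_specNorm_sq (SigmaTheta p ε θ - SigmaTheta p ε θ') hx_unit
  rw [hx_sum, mul_pow, Real.sq_sqrt hH_pos.le] at key
  rw [le_div_iff₀ hH_pos]
  calc ((k : ℝ) * ε) ^ 2 / p * H = ((k : ℝ) * ε) ^ 2 * H / p := by ring
    _ ≤ _ := key

/-- **Lemma 5 of Cai–Zhou (per-comparison loss bound).**  In the lower-bound construction,
for any `θ, θ' ∈ Θ` with `H(γ(θ), γ(θ')) ≥ 1`,
`|||Σ(θ) - Σ(θ')|||² / H(γ(θ), γ(θ')) ≥ (k ε_{n,p})² / p`; hence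
`α = min_{H ≥ 1} |||Σ(θ) - Σ(θ')|||²/H ≥ (k ε_{n,p})²/p`. -/
theorem per_comparison_loss_bound (p k : ℕ) (hp : 2 ≤ p) (hk : 1 ≤ k) (hkr : k ≤ p / 2)
    (ε : ℝ) (hε : 0 < ε)
    (θ θ' : (Fin (p / 2) → Bool) × (Fin (p / 2) → Fin p → Bool))
    (hθ : MemLam p k θ.2) (hθ' : MemLam p k θ'.2)
    (hH : 1 ≤ hamming θ.1 θ'.1) :
    ((k : ℝ) * ε) ^ 2 / p ≤
      specNorm (SigmaTheta p ε θ - SigmaTheta p ε θ') ^ 2 / hamming θ.1 θ'.1 :=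
  per_comparison_loss_bound_general p k ε θ θ' hθ hθ' hH

end
end

section
/- Let P_1, …, P_m and Q_1, …, Q_m be probability measures on a common measurable space with Q_i absolutely continuous with respect to P_i for each i, and let w_1, …, w_m ≥ 0 with Σ_i w_i = 1. If Σ_{i=1}^m w_i [ ∫ (dQ_i/dP_i)^2 dP_i − 1 ] ≤ c^2 for some 0 < c < 1, then the mixtures P̄ = Σ_i w_i P_i and Q̄ = Σ_i w_i Q_i satisfy ‖P̄ ∧ Q̄‖ ≥ 1 − c. -/
/-!
Write `f_i = dQ_i/dP_i` and `D_i = ∫ (f_i - 1)⁺ dP_i`; in `ℝ≥0∞` the truncated difference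
`f_i x - 1` is already the positive part. Since `Q_i s ≤ P_i s + D_i` for every measurable `s`,
`‖P_i ∧ Q_i‖ ≥ 1 - D_i`, and as the affinity is concave, `‖P̄ ∧ Q̄‖ ≥ 1 - Σ_i w_i D_i`.
On the other hand Cauchy–Schwarz and `∫ f_i dP_i = 1` give
`D_i² ≤ ∫ ((f_i - 1)⁺)² dP_i ≤ ∫ f_i² dP_i - 1`, so `(Σ_i w_i D_i)² ≤ Σ_i w_i D_i² ≤ c²`.
-/

open MeasureTheory
open scoped ENNReal NNReal BigOperators

noncomputable section

lemma ENNReal.sub_one_sq_add_two_mul_le (a : ℝ≥0∞) : (a - 1) ^ 2 + 2 * a ≤ a ^ 2 + 1 := by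
  rcases eq_or_ne a ∞ with rfl | ha
  · simp
  lift a to ℝ≥0 using ha
  norm_cast
  rcases le_total a 1 with h | h
  · simpa [tsub_eq_zero_of_le h, mul_comm] using two_mul_le_add_sq a 1
  · rw [← NNReal.coe_le_coe]
    push_cast [h]
    nlinarith

namespace MeasureTheory

variable {Ω : Type*} [MeasurableSpace Ω]

lemma sq_lintegral_le_measure_univ_mul_lintegral_sq {μ : Measure Ω} {g : Ω → ℝ≥0∞}
    (hg : AEMeasurable g μ) :
    (∫⁻ x, g x ∂μ) ^ 2 ≤ μ Set.univ * ∫⁻ x, g x ^ 2 ∂μ := by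
  have hsq : ∀ a : ℝ≥0∞, (a ^ (1 / 2 : ℝ)) ^ 2 = a := by
    simpa using ENNReal.rpow_inv_natCast_pow two_ne_zero
  have h := ENNReal.lintegral_mul_le_Lp_mul_Lq μ Real.HolderConjugate.two_two hg
    (aemeasurable_const (b := (1 : ℝ≥0∞)))
  simp only [Pi.mul_apply, mul_one, ENNReal.rpow_two, one_pow, lintegral_const, one_mul] at h
  calc (∫⁻ x, g x ∂μ) ^ 2
      ≤ ((∫⁻ x, g x ^ 2 ∂μ) ^ (1 / 2 : ℝ) * μ Set.univ ^ (1 / 2 : ℝ)) ^ 2 := by gcongr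
    _ = μ Set.univ * ∫⁻ x, g x ^ 2 ∂μ := by rw [mul_pow, hsq, hsq, mul_comm]

lemma _root_.ENNReal.sq_sum_mul_le_sum_mul_sum_mul_sq {ι : Type*} (s : Finset ι)
    (w f : ι → ℝ≥0∞) :
    (∑ i ∈ s, w i * f i) ^ 2 ≤ (∑ i ∈ s, w i) * ∑ i ∈ s, w i * f i ^ 2 := by
  let _ : MeasurableSpace ι := ⊤
  simpa [lintegral_finsetSum_measure, Measure.finsetSum_apply] using
    sq_lintegral_le_measure_univ_mul_lintegral_sq (μ := ∑ i ∈ s, w i • Measure.dirac i) (g := f)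
      Measurable.of_discrete.aemeasurable

lemma sq_lintegral_sub_one_add_one_le {μ : Measure Ω} [IsProbabilityMeasure μ]
    {f : Ω → ℝ≥0∞} (hf : Measurable f) (hf_one : ∫⁻ x, f x ∂μ = 1) :
    (∫⁻ x, (f x - 1) ∂μ) ^ 2 + 1 ≤ ∫⁻ x, f x ^ 2 ∂μ := by
  have hf_sub : Measurable fun x ↦ f x - 1 := hf.sub measurable_const
  have hvar : ∫⁻ x, (f x - 1) ^ 2 ∂μ + 1 + 1 ≤ ∫⁻ x, f x ^ 2 ∂μ + 1 := by
    calc ∫⁻ x, (f x - 1) ^ 2 ∂μ + 1 + 1 = ∫⁻ x, ((f x - 1) ^ 2 + 2 * f x) ∂μ := by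
          rw [lintegral_add_left (hf_sub.pow_const 2), lintegral_const_mul _ hf, hf_one,
            add_assoc, one_add_one_eq_two, mul_one]
      _ ≤ ∫⁻ x, (f x ^ 2 + 1) ∂μ := lintegral_mono fun x ↦ (f x).sub_one_sq_add_two_mul_le
      _ = ∫⁻ x, f x ^ 2 ∂μ + 1 := by
          rw [lintegral_add_right _ measurable_const, lintegral_const, measure_univ, mul_one]
  calc (∫⁻ x, (f x - 1) ∂μ) ^ 2 + 1 ≤ ∫⁻ x, (f x - 1) ^ 2 ∂μ + 1 := by
        gcongr
        simpa using sq_lintegral_le_measure_univ_mul_lintegral_sq hf_sub.aemeasurable (μ := μ)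
    _ ≤ ∫⁻ x, f x ^ 2 ∂μ := (ENNReal.add_le_add_iff_right ENNReal.one_ne_top).1 hvar

lemma sq_lintegral_rnDeriv_sub_one_add_one_le {μ ν : Measure Ω} [IsProbabilityMeasure μ]
    [IsProbabilityMeasure ν] (hνμ : ν ≪ μ) :
    (∫⁻ x, (ν.rnDeriv μ x - 1) ∂μ) ^ 2 + 1 ≤ ∫⁻ x, ν.rnDeriv μ x ^ 2 ∂μ :=
  sq_lintegral_sub_one_add_one_le (Measure.measurable_rnDeriv ν μ)
    (by rw [Measure.lintegral_rnDeriv hνμ, measure_univ])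

lemma measure_le_add_lintegral_rnDeriv_sub_one {μ ν : Measure Ω}
    [ν.HaveLebesgueDecomposition μ] (hνμ : ν ≪ μ) {s : Set Ω} (hs : MeasurableSet s) :
    ν s ≤ μ s + ∫⁻ x, (ν.rnDeriv μ x - 1) ∂μ := by
  rw [← Measure.setLIntegral_rnDeriv' hνμ hs]
  calc ∫⁻ x in s, ν.rnDeriv μ x ∂μ ≤ ∫⁻ x in s, (1 + (ν.rnDeriv μ x - 1)) ∂μ :=
        lintegral_mono fun x ↦ le_add_tsub
    _ = μ s + ∫⁻ x in s, (ν.rnDeriv μ x - 1) ∂μ := by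
        rw [lintegral_add_left measurable_const, setLIntegral_one]
    _ ≤ μ s + ∫⁻ x, (ν.rnDeriv μ x - 1) ∂μ :=
        add_le_add_right (setLIntegral_le_lintegral s _) _

lemma Measure.le_inf_apply_univ {μ ν : Measure Ω} {a : ℝ≥0∞}
    (h : ∀ s, MeasurableSet s → a ≤ μ s + ν sᶜ) : a ≤ (μ ⊓ ν) Set.univ := by
  rw [Measure.inf_apply MeasurableSet.univ]
  refine le_sInf ?_
  rintro _ ⟨t, rfl⟩
  simp only [Set.inter_univ]
  -- a measurable hull of `t` has the same `μ`-measure and a smaller complement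
  calc a ≤ μ (toMeasurable μ t) + ν (toMeasurable μ t)ᶜ := h _ (measurableSet_toMeasurable μ t)
    _ ≤ μ t + ν tᶜ := by
        rw [measure_toMeasurable]
        gcongr
        exact subset_toMeasurable μ t

lemma one_le_inf_apply_univ_add_lintegral_rnDeriv_sub_one {μ ν : Measure Ω}
    [IsProbabilityMeasure ν] [ν.HaveLebesgueDecomposition μ] (hνμ : ν ≪ μ) :
    1 ≤ (μ ⊓ ν) Set.univ + ∫⁻ x, (ν.rnDeriv μ x - 1) ∂μ := by
  rw [← tsub_le_iff_right]
  refine Measure.le_inf_apply_univ fun s hs ↦ tsub_le_iff_right.2 ?_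
  calc 1 = ν s + ν sᶜ := (prob_add_prob_compl hs).symm
    _ ≤ μ s + ∫⁻ x, (ν.rnDeriv μ x - 1) ∂μ + ν sᶜ := by
        gcongr
        exact measure_le_add_lintegral_rnDeriv_sub_one hνμ hs
    _ = μ s + ν sᶜ + ∫⁻ x, (ν.rnDeriv μ x - 1) ∂μ := add_right_comm _ _ _

lemma one_sub_le_affinity {μ ν : Measure Ω} [IsFiniteMeasure μ] {c : ℝ} (hc : 0 ≤ c)
    (h : 1 ≤ (μ ⊓ ν) Set.univ + ENNReal.ofReal c) : 1 - c ≤ affinity μ ν := by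
  have hfin : (μ ⊓ ν) Set.univ ≠ ∞ :=
    ne_top_of_le_ne_top (measure_ne_top μ _) (Measure.le_iff'.1 inf_le_left _)
  rw [affinity, ← ENNReal.ofReal_le_iff_le_toReal hfin, ENNReal.ofReal_sub _ hc,
    ENNReal.ofReal_one, tsub_le_iff_right]
  exact h

section Mixture

variable {ι : Type*} (s : Finset ι) {w : ι → ℝ≥0∞} {μ ν : ι → Measure Ω}

lemma Measure.sum_smul_inf_le :
    ∑ i ∈ s, w i • (μ i ⊓ ν i) ≤ (∑ i ∈ s, w i • μ i) ⊓ ∑ i ∈ s, w i • ν i :=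
  le_inf (by gcongr; exact inf_le_left) (by gcongr; exact inf_le_right)

lemma sq_sum_mul_lintegral_rnDeriv_sub_one_add_one_le [∀ i, IsProbabilityMeasure (μ i)]
    [∀ i, IsProbabilityMeasure (ν i)] (hνμ : ∀ i, ν i ≪ μ i) (hw : ∑ i ∈ s, w i = 1) :
    (∑ i ∈ s, w i * ∫⁻ x, ((ν i).rnDeriv (μ i) x - 1) ∂(μ i)) ^ 2 + 1 ≤
      ∑ i ∈ s, w i * ∫⁻ x, (ν i).rnDeriv (μ i) x ^ 2 ∂(μ i) := by
  calc (∑ i ∈ s, w i * ∫⁻ x, ((ν i).rnDeriv (μ i) x - 1) ∂(μ i)) ^ 2 + 1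
      ≤ ∑ i ∈ s, w i * (∫⁻ x, ((ν i).rnDeriv (μ i) x - 1) ∂(μ i)) ^ 2 + 1 := by
        grw [ENNReal.sq_sum_mul_le_sum_mul_sum_mul_sq, hw, one_mul]
    _ = ∑ i ∈ s, w i * ((∫⁻ x, ((ν i).rnDeriv (μ i) x - 1) ∂(μ i)) ^ 2 + 1) := by
        simp only [mul_add, mul_one, Finset.sum_add_distrib, hw]
    _ ≤ ∑ i ∈ s, w i * ∫⁻ x, (ν i).rnDeriv (μ i) x ^ 2 ∂(μ i) := by
        gcongr with i
        exact sq_lintegral_rnDeriv_sub_one_add_one_le (hνμ i)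

lemma one_le_inf_apply_univ_add_sum_mul_lintegral_rnDeriv_sub_one
    [∀ i, IsProbabilityMeasure (ν i)] [∀ i, (ν i).HaveLebesgueDecomposition (μ i)]
    (hνμ : ∀ i, ν i ≪ μ i) (hw : ∑ i ∈ s, w i = 1) :
    1 ≤ ((∑ i ∈ s, w i • μ i) ⊓ ∑ i ∈ s, w i • ν i) Set.univ +
      ∑ i ∈ s, w i * ∫⁻ x, ((ν i).rnDeriv (μ i) x - 1) ∂(μ i) := by
  calc 1 = ∑ i ∈ s, w i * 1 := by simp only [mul_one, hw]
    _ ≤ ∑ i ∈ s, w i * ((μ i ⊓ ν i) Set.univ + ∫⁻ x, ((ν i).rnDeriv (μ i) x - 1) ∂(μ i)) := by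
        gcongr with i
        exact one_le_inf_apply_univ_add_lintegral_rnDeriv_sub_one (hνμ i)
    _ = (∑ i ∈ s, w i • (μ i ⊓ ν i)) Set.univ +
          ∑ i ∈ s, w i * ∫⁻ x, ((ν i).rnDeriv (μ i) x - 1) ∂(μ i) := by
        simp only [mul_add, Finset.sum_add_distrib, Measure.finsetSum_apply, Measure.smul_apply,
          smul_eq_mul]
    _ ≤ _ := by grw [Measure.sum_smul_inf_le]

end Mixture

end MeasureTheory

theorem affinity_ge_of_chi_squared_general {Ω : Type*} [MeasurableSpace Ω] (m : ℕ)
    (P Q : Fin m → Measure Ω)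
    (hP : ∀ i, IsProbabilityMeasure (P i)) (hQ : ∀ i, IsProbabilityMeasure (Q i))
    (hac : ∀ i, Q i ≪ P i)
    (w : Fin m → ℝ≥0) (hw : ∑ i, w i = 1)
    (c : ℝ) (hc0 : 0 < c)
    (hchi : ∑ i, (w i : ℝ≥0∞) * ∫⁻ x, ((Q i).rnDeriv (P i) x) ^ 2 ∂(P i) ≤
      ENNReal.ofReal (1 + c ^ 2)) :
    1 - c ≤ affinity (∑ i, (w i : ℝ≥0∞) • P i) (∑ i, (w i : ℝ≥0∞) • Q i) := by
  set D := ∑ i, (w i : ℝ≥0∞) * ∫⁻ x, ((Q i).rnDeriv (P i) x - 1) ∂(P i)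
  have hw' : ∑ i, (w i : ℝ≥0∞) = 1 := by exact_mod_cast hw
  have hD : D ≤ ENNReal.ofReal c := by
    rw [← ENNReal.pow_le_pow_left_iff two_ne_zero,
      ← ENNReal.add_le_add_iff_right ENNReal.one_ne_top]
    calc D ^ 2 + 1 ≤ ∑ i, (w i : ℝ≥0∞) * ∫⁻ x, ((Q i).rnDeriv (P i) x) ^ 2 ∂(P i) :=
          sq_sum_mul_lintegral_rnDeriv_sub_one_add_one_le _ hac hw'
      _ ≤ ENNReal.ofReal (1 + c ^ 2) := hchi
      _ = ENNReal.ofReal c ^ 2 + 1 := by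
          rw [ENNReal.ofReal_add zero_le_one (sq_nonneg c), ENNReal.ofReal_pow hc0.le,
            ENNReal.ofReal_one, add_comm]
  have (i : Fin m) : IsFiniteMeasure ((w i : ℝ≥0∞) • P i) := (P i).smul_finite ENNReal.coe_ne_top
  refine one_sub_le_affinity hc0.le ?_
  grw [← hD]
  exact one_le_inf_apply_univ_add_sum_mul_lintegral_rnDeriv_sub_one _ hac hw'

/-- **Chi-squared bound for the affinity of mixtures (Lemma 7(ii) of Cai–Zhou, in mixture
form).**  If `Q_i ≪ P_i` and the average chi-squared divergence satisfies
`Σ_i w_i [∫ (dQ_i/dP_i)² dP_i - 1] ≤ c²` (equivalently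
`Σ_i w_i ∫ (dQ_i/dP_i)² dP_i ≤ 1 + c²`) for some `0 < c < 1`, then
`‖Σ_i w_i P_i ∧ Σ_i w_i Q_i‖ ≥ 1 - c`. -/
theorem affinity_ge_of_chi_squared {Ω : Type*} [MeasurableSpace Ω] (m : ℕ)
    (P Q : Fin m → Measure Ω)
    (hP : ∀ i, IsProbabilityMeasure (P i)) (hQ : ∀ i, IsProbabilityMeasure (Q i))
    (hac : ∀ i, Q i ≪ P i)
    (w : Fin m → ℝ≥0) (hw : ∑ i, w i = 1)
    (c : ℝ) (hc0 : 0 < c) (hc1 : c < 1)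
    (hchi : ∑ i, (w i : ℝ≥0∞) * ∫⁻ x, ((Q i).rnDeriv (P i) x) ^ 2 ∂(P i) ≤
      ENNReal.ofReal (1 + c ^ 2)) :
    1 - c ≤ affinity (∑ i, (w i : ℝ≥0∞) • P i) (∑ i, (w i : ℝ≥0∞) • Q i) :=
  affinity_ge_of_chi_squared_general m P Q hP hQ hac w hw c hc0 hchi

end
end

section
/- Let p ≥ 2, ε > 0, and let r, r' ∈ ℝ^p be vectors whose first coordinates are zero, each having exactly k nonzero entries all equal to ε, and whose supports overlap in exactly J positions. Let Δ_1 = e_1 r^T + r e_1^T and Δ_2 = e_1 r'^T + r' e_1^T, where e_1 is the first standard basis vector; thus Δ_i has nonzero entries only in its first row and first column. Then Q = Δ_1 Δ_2 satisfies: q_{11} = J ε^2; q_{ij} = ε^2 for i in the support of r and j in the support of r'; and q_{ij} = 0 otherwise. Moreover, if J > 0 then Δ_1 Δ_2 has rank 2, and its two nonzero eigenvalues are both equal to J ε^2. -/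
/-!
Because `r` and `r'` are orthogonal to the unit vector `e₁`, expanding the product gives
`Δ₁ Δ₂ = (r ⬝ r') e₁ e₁ᵀ + r r'ᵀ` with `r ⬝ r' = J ε²`, and the entries can be read off.
The two rank-one summands `A`, `B` satisfy `A B = 0`, so `(X - A)(X - B) = X (X - (A + B))`:
the characteristic polynomial of the sum is then determined by those of the rank-one pieces,
`X^{p-1} (X - J ε²)` each. The rank is at most `2` as a sum of two rank-one matrices, and at
least `2` because the minor on rows and columns `{1, j}`, `j ∈ S ∩ S'`, is `diag (J ε², ε²)`.
-/

open Matrix Polynomial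

namespace Matrix

variable {n R K : Type*} [Fintype n]

theorem dotProduct_ite_mem_ite_mem [DecidableEq n] [CommSemiring R] (S S' : Finset n) (a b : R) :
    (fun j => if j ∈ S then a else 0) ⬝ᵥ (fun j => if j ∈ S' then b else 0) =
      (S ∩ S').card * (a * b) := by
  simp [dotProduct, ← ite_and, ← Finset.mem_inter, Finset.sum_ite_mem, Finset.inter_comm S' S]

theorem vecMulVec_add_vecMulVec_mul_vecMulVec_add_vecMulVec [CommRing R] (e r r' : n → R)
    (hr : e ⬝ᵥ r = 0) (hr' : e ⬝ᵥ r' = 0) (he : e ⬝ᵥ e = 1) :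
    (vecMulVec e r + vecMulVec r e) * (vecMulVec e r' + vecMulVec r' e) =
      vecMulVec ((r ⬝ᵥ r') • e) e + vecMulVec r r' := by
  simp only [add_mul, mul_add, vecMulVec_mul_vecMulVec, dotProduct_comm r e, hr, hr', he,
    zero_smul, one_smul, vecMulVec_zero, zero_add, add_zero, smul_vecMulVec, vecMulVec_smul]
  exact add_comm _ _

theorem charmatrix_mul_charmatrix_of_mul_eq_zero [DecidableEq n] [CommRing R]
    {A B : Matrix n n R} (h : A * B = 0) :
    A.charmatrix * B.charmatrix = (X : R[X]) • (A + B).charmatrix := by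
  have hAB : C.mapMatrix A * C.mapMatrix B = 0 := by rw [← _root_.map_mul, h, map_zero]
  have hl (M : Matrix n n R[X]) : scalar n (X : R[X]) * M = (X : R[X]) • M :=
    (smul_eq_diagonal_mul M (X : R[X])).symm
  have hr (M : Matrix n n R[X]) : M * scalar n (X : R[X]) = (X : R[X]) • M := by
    rw [← (scalar_commute X (Commute.all X) M).eq, hl]
  simp only [charmatrix, sub_mul, mul_sub, hAB, hl, hr, map_add, smul_sub, smul_add]
  abel

theorem charpoly_mul_charpoly_of_mul_eq_zero [DecidableEq n] [CommRing R]
    {A B : Matrix n n R} (h : A * B = 0) :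
    A.charpoly * B.charpoly = X ^ Fintype.card n * (A + B).charpoly := by
  rw [charpoly, charpoly, charpoly, ← det_mul, ← det_smul,
    charmatrix_mul_charmatrix_of_mul_eq_zero h]

theorem charpoly_vecMulVec_add_vecMulVec [DecidableEq n] [CommRing R] (u v w x : n → R)
    (h : v ⬝ᵥ w = 0) (hn : 2 ≤ Fintype.card n) :
    (vecMulVec u v + vecMulVec w x).charpoly =
      (X - C (u ⬝ᵥ v)) * (X - C (w ⬝ᵥ x)) * X ^ (Fintype.card n - 2) := by
  have hprod : vecMulVec u v * vecMulVec w x = 0 := by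
    rw [vecMulVec_mul_vecMulVec, h, zero_smul, vecMulVec_zero]
  apply (isRegular_X_pow (R := R) (Fintype.card n)).left
  dsimp only
  rw [← charpoly_mul_charpoly_of_mul_eq_zero hprod, charpoly_vecMulVec, charpoly_vecMulVec]
  obtain ⟨m, hm⟩ : ∃ m, Fintype.card n = m + 2 := ⟨_, (Nat.sub_add_cancel hn).symm⟩
  rw [hm, show m + 2 - 1 = m + 1 by omega, Nat.add_sub_cancel, smul_eq_C_mul, smul_eq_C_mul]
  ring

theorem rank_add_le_rank_add_rank [Field K] (A B : Matrix n n K) :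
    (A + B).rank ≤ A.rank + B.rank := by
  rw [rank, rank, rank, mulVecLin_add]
  exact (Submodule.finrank_mono (LinearMap.range_add_le _ _)).trans
    (Submodule.finrank_add_le_finrank_add_finrank _ _)

theorem rank_vecMulVec_add_vecMulVec_le [Field K] (u v w x : n → K) :
    (vecMulVec u v + vecMulVec w x).rank ≤ 2 :=
  (rank_add_le_rank_add_rank _ _).trans
    (add_le_add (rank_vecMulVec_le u v) (rank_vecMulVec_le w x))

theorem two_le_rank_of_det_submatrix_ne_zero [Field K] (A : Matrix n n K) (i j : Fin 2 → n)
    (h : (A.submatrix i j).det ≠ 0) : 2 ≤ A.rank :=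
  calc 2 = (A.submatrix i j).rank := by
        rw [rank_of_isUnit _ ((isUnit_iff_isUnit_det _).mpr h.isUnit), Fintype.card_fin]
    _ ≤ A.rank := rank_submatrix_le A i j

end Matrix

theorem cross_product_structure_general (p : ℕ) (ε : ℝ) (hε : 0 < ε)
    (S S' : Finset (Fin p)) (J : ℕ)
    (i0 : Fin p)
    (h0S : i0 ∉ S) (h0S' : i0 ∉ S')
    (hJ : (S ∩ S').card = J) :
    let r : Fin p → ℝ := fun j => if j ∈ S then ε else 0
    let r' : Fin p → ℝ := fun j => if j ∈ S' then ε else 0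
    let e1 : Fin p → ℝ := fun j => if j = i0 then 1 else 0
    let Q : Matrix (Fin p) (Fin p) ℝ :=
      (Matrix.vecMulVec e1 r + Matrix.vecMulVec r e1) *
        (Matrix.vecMulVec e1 r' + Matrix.vecMulVec r' e1)
    (Q i0 i0 = (J : ℝ) * ε ^ 2) ∧
      (∀ i ∈ S, ∀ j ∈ S', Q i j = ε ^ 2) ∧
      (∀ i j : Fin p, ¬(i = i0 ∧ j = i0) → (i ∉ S ∨ j ∉ S') → Q i j = 0) ∧
      (0 < J →
        Q.rank = 2 ∧
          Q.charpoly =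
            (Polynomial.X - Polynomial.C ((J : ℝ) * ε ^ 2)) ^ 2 * Polynomial.X ^ (p - 2)) := by
  intro r r' e1 Q
  have he1 : e1 = Pi.single i0 1 := by ext j; simp [e1, Pi.single_apply]
  have her : e1 ⬝ᵥ r = 0 := by simp [he1, single_dotProduct, r, h0S]
  have her' : e1 ⬝ᵥ r' = 0 := by simp [he1, single_dotProduct, r', h0S']
  have hrr' : r ⬝ᵥ r' = J * ε ^ 2 := by rw [dotProduct_ite_mem_ite_mem, hJ, sq]
  have hQ : Q = vecMulVec ((J * ε ^ 2 : ℝ) • e1) e1 + vecMulVec r r' := by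
    rw [← hrr']
    exact vecMulVec_add_vecMulVec_mul_vecMulVec_add_vecMulVec e1 r r' her her' (by simp [he1])
  have hQij (i j : Fin p) : Q i j = J * ε ^ 2 * e1 i * e1 j + r i * r' j := by
    simp only [hQ, Matrix.add_apply, vecMulVec_apply, Pi.smul_apply, smul_eq_mul]
  refine ⟨by simp [hQij, e1, r, h0S], fun i hi j hj => ?_, fun i j hij hS => ?_, fun hJpos => ?_⟩
  · simp [hQij, e1, r, r', hi, hj, ne_of_mem_of_not_mem hi h0S, sq]
  · simp only [hQij, e1, r, r']
    split_ifs <;> simp_all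
  obtain ⟨j1, hj1⟩ := Finset.card_pos.mp (hJ ▸ hJpos)
  obtain ⟨hj1S, hj1S'⟩ := Finset.mem_inter.mp hj1
  have hrank_ge : 2 ≤ Q.rank := by
    refine two_le_rank_of_det_submatrix_ne_zero Q ![i0, j1] ![i0, j1] ?_
    rw [det_fin_two]
    simpa [hQij, e1, r, r', h0S, hj1S, hj1S', ne_of_mem_of_not_mem hj1S h0S] using
      ⟨hJpos.ne', hε.ne'⟩
  have hp : 2 ≤ Fintype.card (Fin p) := hrank_ge.trans (rank_le_card_width Q)
  refine ⟨le_antisymm (hQ ▸ rank_vecMulVec_add_vecMulVec_le _ _ _ _) hrank_ge, ?_⟩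
  rw [hQ, charpoly_vecMulVec_add_vecMulVec _ _ _ _ her hp, hrr', Fintype.card_fin]
  simp [he1, dotProduct_single, sq]

/-- **Lemma (structure of the cross product, Lemma 7/`sigmai` of Cai–Zhou).**
Let `r, r' ∈ ℝ^p` be supported off the first coordinate, each with exactly `k` nonzero
entries equal to `ε`, with supports overlapping in exactly `J` positions, and let
`Δ_i = e₁ rᵀ + r e₁ᵀ` (resp. with `r'`).  Then `Q = Δ₁ Δ₂` has `q₁₁ = J ε²`,
`q_{ij} = ε²` for `i` in the support of `r` and `j` in the support of `r'`, and `q_{ij} = 0`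
otherwise; moreover if `J > 0` then `Q` has rank `2` and its two nonzero eigenvalues both
equal `J ε²` (its characteristic polynomial is `(X - J ε²)² X^{p-2}`). -/
theorem cross_product_structure (p : ℕ) (hp : 2 ≤ p) (ε : ℝ) (hε : 0 < ε) (k : ℕ)
    (S S' : Finset (Fin p)) (J : ℕ)
    (i0 : Fin p) (hi0 : (i0 : ℕ) = 0)
    (h0S : i0 ∉ S) (h0S' : i0 ∉ S')
    (hSk : S.card = k) (hS'k : S'.card = k) (hJ : (S ∩ S').card = J) :
    let r : Fin p → ℝ := fun j => if j ∈ S then ε else 0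
    let r' : Fin p → ℝ := fun j => if j ∈ S' then ε else 0
    let e1 : Fin p → ℝ := fun j => if j = i0 then 1 else 0
    let Q : Matrix (Fin p) (Fin p) ℝ :=
      (Matrix.vecMulVec e1 r + Matrix.vecMulVec r e1) *
        (Matrix.vecMulVec e1 r' + Matrix.vecMulVec r' e1)
    (Q i0 i0 = (J : ℝ) * ε ^ 2) ∧
      (∀ i ∈ S, ∀ j ∈ S', Q i j = ε ^ 2) ∧
      (∀ i j : Fin p, ¬(i = i0 ∧ j = i0) → (i ∉ S ∨ j ∉ S') → Q i j = 0) ∧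
      (0 < J →
        Q.rank = 2 ∧
          Q.charpoly =
            (Polynomial.X - Polynomial.C ((J : ℝ) * ε ^ 2)) ^ 2 * Polynomial.X ^ (p - 2)) :=
  cross_product_structure_general p ε hε S S' J i0 h0S h0S' hJ
end

section
/- Let 0 < ε_2 < M_2 and let X, Y be p×p symmetric matrices all of whose eigenvalues lie in [ε_2, M_2]. Then there exist constants c_2 > c_1 > 0 depending only on ε_2 and M_2 such that for every φ ∈ Ψ, c_1 |||X − Y|||_F^2 ≤ D_φ(X, Y) ≤ c_2 |||X − Y|||_F^2. -/
/-!
Writing `X = Σ λ_i v_i v_iᵀ` and `Y = Σ γ_j u_j u_jᵀ`, both `D_φ(X, Y)` and `|||X - Y|||_F²` are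
sums over `i, j` with the same doubly stochastic weights `(v_iᵀ u_j)²`, of the scalar quantities
`φ(λ_i) - φ(γ_j) - φ'(γ_j)(λ_i - γ_j)` and `(λ_i - γ_j)²` respectively. Since
`c_L ≤ φ'' ≤ c_u` on `[ε₂, M₂]`, the functions `φ - c_L x²/2` and `c_u x²/2 - φ` are convex there
and lie above their tangents, which traps the first quantity between `c_L/2` and `c_u/2` times the
second; so `c₁ = c_L/2` and `c₂ = c_u` work.
-/

open scoped BigOperators

noncomputable section

/-- Functional calculus for a symmetric real matrix: apply `g` to the eigenvalues in a
spectral decomposition. -/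
def matApply (g : ℝ → ℝ) {p : ℕ} {Y : Matrix (Fin p) (Fin p) ℝ} (hY : Y.IsHermitian) :
    Matrix (Fin p) (Fin p) ℝ :=
  (hY.eigenvectorUnitary : Matrix (Fin p) (Fin p) ℝ) *
    Matrix.diagonal (fun i => g (hY.eigenvalues i)) *
    star (hY.eigenvectorUnitary : Matrix (Fin p) (Fin p) ℝ)

/-- The Bregman matrix divergence
`D_φ(X, Y) = Σ_i φ(λ_i(X)) - Σ_j φ(λ_j(Y)) - tr(φ'(Y)(X - Y))` associated with
`φ(A) = Σ_i φ(λ_i(A))` (defined to be `0` if `X` or `Y` is not symmetric). -/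
def bregmanD (φ : ℝ → ℝ) {p : ℕ} (X Y : Matrix (Fin p) (Fin p) ℝ) : ℝ :=
  if h : X.IsHermitian ∧ Y.IsHermitian then
    (∑ i, φ (h.1.eigenvalues i)) - (∑ j, φ (h.2.eigenvalues j)) -
      (matApply (deriv φ) h.2 * (X - Y)).trace
  else 0

open Matrix

def scalarBregmanD (φ : ℝ → ℝ) (a b : ℝ) : ℝ := φ a - φ b - deriv φ b * (a - b)

theorem ConvexOn.deriv_mul_sub_le {S : Set ℝ} {g : ℝ → ℝ} (hg : ConvexOn ℝ S g) {a b : ℝ}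
    (ha : a ∈ S) (hb : b ∈ S) (hd : DifferentiableAt ℝ g b) :
    deriv g b * (a - b) ≤ g a - g b := by
  rcases lt_trichotomy a b with hab | rfl | hab
  · have h := hg.slope_le_deriv ha hb hab hd
    rw [slope_def_field, div_le_iff₀ (sub_pos.2 hab)] at h
    linarith
  · simp
  · have h := hg.deriv_le_slope hb ha hab hd
    rw [slope_def_field, le_div_iff₀ (sub_pos.2 hab)] at h
    linarith

section Taylor

variable {S : Set ℝ} {f : ℝ → ℝ} {C a b : ℝ}

theorem half_mul_sq_le_scalarBregmanD (hS : Convex ℝ S)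
    (hf : ∀ x ∈ S, DifferentiableAt ℝ f x) (hf' : ∀ x ∈ S, DifferentiableAt ℝ (deriv f) x)
    (hC : ∀ x ∈ S, C ≤ deriv (deriv f) x) (ha : a ∈ S) (hb : b ∈ S) :
    C / 2 * (a - b) ^ 2 ≤ scalarBregmanD f a b := by
  -- `f - C x² / 2` has nonnegative second derivative, so it lies above its tangent at `b`.
  set g : ℝ → ℝ := fun x => f x - C / 2 * x ^ 2
  have hg : ∀ x ∈ S, HasDerivAt g (deriv f x - C * x) x := fun x hx => by
    refine ((hf x hx).hasDerivAt.sub ((hasDerivAt_pow 2 x).const_mul (C / 2))).congr_deriv ?_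
    push_cast
    ring
  have hg' : ∀ x ∈ S, HasDerivAt (fun x => deriv f x - C * x) (deriv (deriv f) x - C) x :=
    fun x hx => ((hf' x hx).hasDerivAt.sub ((hasDerivAt_id' x).const_mul C)).congr_deriv (by ring)
  have hconv : ConvexOn ℝ S g := convexOn_of_hasDerivWithinAt2_nonneg hS
    (fun x hx => (hg x hx).continuousAt.continuousWithinAt)
    (fun x hx => (hg x (interior_subset hx)).hasDerivWithinAt)
    (fun x hx => (hg' x (interior_subset hx)).hasDerivWithinAt)
    (fun x hx => sub_nonneg.2 (hC x (interior_subset hx)))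
  have htangent := hconv.deriv_mul_sub_le ha hb (hg b hb).differentiableAt
  rw [(hg b hb).deriv] at htangent
  simp only [scalarBregmanD, g] at htangent ⊢
  linarith

theorem scalarBregmanD_le_half_mul_sq (hS : Convex ℝ S)
    (hf : ∀ x ∈ S, DifferentiableAt ℝ f x) (hf' : ∀ x ∈ S, DifferentiableAt ℝ (deriv f) x)
    (hC : ∀ x ∈ S, deriv (deriv f) x ≤ C) (ha : a ∈ S) (hb : b ∈ S) :
    scalarBregmanD f a b ≤ C / 2 * (a - b) ^ 2 := by
  have hneg : deriv (fun x => -f x) = fun x => -deriv f x := funext fun _ => deriv.fun_neg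
  have h := half_mul_sq_le_scalarBregmanD (f := fun x => -f x) (C := -C) hS
    (fun x hx => (hf x hx).neg) (by rw [hneg]; exact fun x hx => (hf' x hx).neg)
    (fun x hx => by rw [hneg, deriv.fun_neg]; linarith [hC x hx]) ha hb
  simp only [scalarBregmanD, hneg] at h ⊢
  linarith

end Taylor

theorem Matrix.sum_apply_sq_eq_one_of_mem_unitaryGroup {n : Type*} [Fintype n] [DecidableEq n]
    {W : Matrix n n ℝ} (hW : W ∈ unitaryGroup n ℝ) (j : n) : ∑ i, W j i ^ 2 = 1 := by
  simpa [mul_apply, sq] using congrFun₂ (mem_unitaryGroup_iff.mp hW) j j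

theorem Matrix.sum_apply_sq_eq_one_of_mem_unitaryGroup' {n : Type*} [Fintype n] [DecidableEq n]
    {W : Matrix n n ℝ} (hW : W ∈ unitaryGroup n ℝ) (i : n) : ∑ j, W j i ^ 2 = 1 := by
  simpa [mul_apply, sq] using congrFun₂ (mem_unitaryGroup_iff'.mp hW) i i

theorem Matrix.IsHermitian.sum_sum_apply_sq_eq_trace_mul_self {n : Type*} [Fintype n]
    {A : Matrix n n ℝ} (hA : A.IsHermitian) : ∑ i, ∑ j, A i j ^ 2 = (A * A).trace := by
  refine Finset.sum_congr rfl fun i _ => ?_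
  simp only [diag_apply, mul_apply, sq]
  refine Finset.sum_congr rfl fun j _ => ?_
  rw [← hA.apply j i, star_trivial]

section Spectral

variable {p : ℕ} {X Y : Matrix (Fin p) (Fin p) ℝ}

/-- `(v_iᵀ u_j)²`, for `u_j` the `j`-th eigenvector of `Y` and `v_i` the `i`-th one of `X`. -/
def eigenOverlap (hX : X.IsHermitian) (hY : Y.IsHermitian) (j i : Fin p) : ℝ :=
  ((star hY.eigenvectorUnitary * hX.eigenvectorUnitary : unitaryGroup (Fin p) ℝ) j i) ^ 2

variable (hX : X.IsHermitian) (hY : Y.IsHermitian)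

theorem eigenOverlap_nonneg (j i : Fin p) : 0 ≤ eigenOverlap hX hY j i := sq_nonneg _

theorem sum_sum_eigenOverlap_mul_left (F : Fin p → ℝ) :
    ∑ j, ∑ i, eigenOverlap hX hY j i * F j = ∑ j, F j := by
  simp only [← Finset.sum_mul, eigenOverlap,
    sum_apply_sq_eq_one_of_mem_unitaryGroup (SetLike.coe_mem _), one_mul]

theorem sum_sum_eigenOverlap_mul_right (G : Fin p → ℝ) :
    ∑ j, ∑ i, eigenOverlap hX hY j i * G i = ∑ i, G i := by
  rw [Finset.sum_comm]
  simp only [← Finset.sum_mul, eigenOverlap,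
    sum_apply_sq_eq_one_of_mem_unitaryGroup' (SetLike.coe_mem _), one_mul]

theorem matApply_id : matApply id hX = X := by
  conv_rhs => rw [hX.spectral_theorem]
  simp [matApply, RCLike.ofReal_real_eq_id]

theorem trace_matApply_mul_matApply_self (g h : ℝ → ℝ) :
    (matApply g hY * matApply h hY).trace = ∑ j, g (hY.eigenvalues j) * h (hY.eigenvalues j) := by
  set V : Matrix (Fin p) (Fin p) ℝ := ↑hY.eigenvectorUnitary
  have hVV : star V * V = 1 := UnitaryGroup.star_mul_self _
  have hprod : matApply g hY * matApply h hY = V * (diagonal (fun j => g (hY.eigenvalues j)) *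
      diagonal (fun j => h (hY.eigenvalues j))) * star V := by
    simp only [matApply, V, Matrix.mul_assoc]
    rw [← Matrix.mul_assoc (star V), hVV, Matrix.one_mul]
  rw [hprod, trace_mul_cycle, hVV, Matrix.one_mul, diagonal_mul_diagonal, trace_diagonal]

theorem trace_matApply_mul_matApply (g h : ℝ → ℝ) :
    (matApply g hY * matApply h hX).trace =
      ∑ j, ∑ i, eigenOverlap hX hY j i * (g (hY.eigenvalues j) * h (hX.eigenvalues i)) := by
  set V : Matrix (Fin p) (Fin p) ℝ := ↑hY.eigenvectorUnitary
  set U : Matrix (Fin p) (Fin p) ℝ := ↑hX.eigenvectorUnitary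
  set W := star V * U
  have hcycle : (matApply g hY * matApply h hX).trace =
      (diagonal (fun j => g (hY.eigenvalues j)) * W * diagonal (fun i => h (hX.eigenvalues i)) *
        star W).trace := by
    have hprod : matApply g hY * matApply h hX = V * (diagonal (fun j => g (hY.eigenvalues j)) *
        W * diagonal (fun i => h (hX.eigenvalues i)) * star U) := by
      simp only [matApply, V, U, W, Matrix.mul_assoc]
    rw [hprod, trace_mul_comm]
    simp only [W, star_mul, star_star, Matrix.mul_assoc]
  rw [hcycle, trace]
  refine Finset.sum_congr rfl fun j _ => ?_
  rw [diag_apply, mul_apply]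
  refine Finset.sum_congr rfl fun i _ => ?_
  simp only [mul_diagonal, diagonal_mul, star_apply, star_trivial, eigenOverlap, W, U, V,
    Unitary.coe_star, Submonoid.coe_mul]
  ring

theorem bregmanD_eq_sum_eigenOverlap_mul (φ : ℝ → ℝ) :
    bregmanD φ X Y = ∑ j, ∑ i, eigenOverlap hX hY j i *
      scalarBregmanD φ (hX.eigenvalues i) (hY.eigenvalues j) := by
  have hcross := trace_matApply_mul_matApply hX hY (deriv φ) id
  have hself := trace_matApply_mul_matApply_self hY (deriv φ) id
  rw [matApply_id] at hcross hself
  rw [bregmanD, dif_pos ⟨hX, hY⟩, Matrix.mul_sub, trace_sub, hcross, hself,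
    ← sum_sum_eigenOverlap_mul_right hX hY (fun i => φ (hX.eigenvalues i)),
    ← sum_sum_eigenOverlap_mul_left hX hY (fun j => φ (hY.eigenvalues j)),
    ← sum_sum_eigenOverlap_mul_left hX hY
      (fun j => deriv φ (hY.eigenvalues j) * id (hY.eigenvalues j))]
  simp only [← Finset.sum_sub_distrib]
  refine Finset.sum_congr rfl fun j _ => Finset.sum_congr rfl fun i _ => ?_
  simp only [scalarBregmanD, id]
  ring

theorem sum_sum_sub_apply_sq_eq_sum_eigenOverlap_mul :
    ∑ i, ∑ j, (X - Y) i j ^ 2 =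
      ∑ j, ∑ i, eigenOverlap hX hY j i * (hX.eigenvalues i - hY.eigenvalues j) ^ 2 := by
  have hXX := trace_matApply_mul_matApply_self hX id id
  have hYY := trace_matApply_mul_matApply_self hY id id
  have hYX := trace_matApply_mul_matApply hX hY id id
  simp only [matApply_id, id] at hXX hYY hYX
  rw [(hX.sub hY).sum_sum_apply_sq_eq_trace_mul_self, Matrix.sub_mul, Matrix.mul_sub,
    Matrix.mul_sub, trace_sub, trace_sub, trace_sub, trace_mul_comm X Y, hXX, hYY, hYX,
    ← sum_sum_eigenOverlap_mul_right hX hY (fun i => hX.eigenvalues i * hX.eigenvalues i),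
    ← sum_sum_eigenOverlap_mul_left hX hY (fun j => hY.eigenvalues j * hY.eigenvalues j)]
  simp only [← Finset.sum_sub_distrib]
  refine Finset.sum_congr rfl fun j _ => Finset.sum_congr rfl fun i _ => ?_
  ring

variable {S : Set ℝ} {φ : ℝ → ℝ} {C : ℝ}

theorem half_mul_sum_sum_sq_le_bregmanD (hS : Convex ℝ S)
    (hφ : ∀ x ∈ S, DifferentiableAt ℝ φ x) (hφ' : ∀ x ∈ S, DifferentiableAt ℝ (deriv φ) x)
    (hC : ∀ x ∈ S, C ≤ deriv (deriv φ) x)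
    (hXS : ∀ i, hX.eigenvalues i ∈ S) (hYS : ∀ j, hY.eigenvalues j ∈ S) :
    C / 2 * ∑ i, ∑ j, (X - Y) i j ^ 2 ≤ bregmanD φ X Y := by
  rw [bregmanD_eq_sum_eigenOverlap_mul hX hY, sum_sum_sub_apply_sq_eq_sum_eigenOverlap_mul hX hY]
  simp_rw [Finset.mul_sum, mul_left_comm (C / 2)]
  gcongr with j _ i _
  · exact eigenOverlap_nonneg hX hY j i
  · exact half_mul_sq_le_scalarBregmanD hS hφ hφ' hC (hXS i) (hYS j)

theorem bregmanD_le_half_mul_sum_sum_sq (hS : Convex ℝ S)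
    (hφ : ∀ x ∈ S, DifferentiableAt ℝ φ x) (hφ' : ∀ x ∈ S, DifferentiableAt ℝ (deriv φ) x)
    (hC : ∀ x ∈ S, deriv (deriv φ) x ≤ C)
    (hXS : ∀ i, hX.eigenvalues i ∈ S) (hYS : ∀ j, hY.eigenvalues j ∈ S) :
    bregmanD φ X Y ≤ C / 2 * ∑ i, ∑ j, (X - Y) i j ^ 2 := by
  rw [bregmanD_eq_sum_eigenOverlap_mul hX hY, sum_sum_sub_apply_sq_eq_sum_eigenOverlap_mul hX hY]
  simp_rw [Finset.mul_sum, mul_left_comm (C / 2)]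
  gcongr with j _ i _
  · exact eigenOverlap_nonneg hX hY j i
  · exact scalarBregmanD_le_half_mul_sq hS hφ hφ' hC (hXS i) (hYS j)

end Spectral

theorem bregman_equiv_frobenius_general (ε₂ M₂ : ℝ) (hε₂ : 0 < ε₂)
    (cL cu : ℝ) (hcL : 0 < cL) (hcLu : cL ≤ cu) :
    ∃ c₁ c₂ : ℝ, 0 < c₁ ∧ c₁ < c₂ ∧
      ∀ (p : ℕ) (X Y : Matrix (Fin p) (Fin p) ℝ)
        (hX : X.IsHermitian) (hY : Y.IsHermitian),
        (∀ i, hX.eigenvalues i ∈ Set.Icc ε₂ M₂) →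
        (∀ i, hY.eigenvalues i ∈ Set.Icc ε₂ M₂) →
        ∀ φ : ℝ → ℝ,
          (∀ x ∈ Set.Ioi (0 : ℝ), DifferentiableAt ℝ φ x) →
          (∀ x ∈ Set.Ioi (0 : ℝ), DifferentiableAt ℝ (deriv φ) x) →
          StrictConvexOn ℝ (Set.Ioi (0 : ℝ)) φ →
          (∃ C r : ℝ, 0 < C ∧ ∀ x : ℝ, 0 < x → |φ x| ≤ C * x ^ r) →
          (∀ x ∈ Set.Icc ε₂ M₂, cL ≤ deriv (deriv φ) x ∧ deriv (deriv φ) x ≤ cu) →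
          c₁ * (∑ i, ∑ j, ((X - Y) i j) ^ 2) ≤ bregmanD φ X Y ∧
            bregmanD φ X Y ≤ c₂ * (∑ i, ∑ j, ((X - Y) i j) ^ 2) := by
  refine ⟨cL / 2, cu, by positivity, by linarith, ?_⟩
  intro p X Y hX hY hXspec hYspec φ hφ hφ' _ _ hφ''
  have hpos : Set.Icc ε₂ M₂ ⊆ Set.Ioi 0 := fun x hx => hε₂.trans_le hx.1
  have hd : ∀ x ∈ Set.Icc ε₂ M₂, DifferentiableAt ℝ φ x := fun x hx => hφ x (hpos hx)
  have hd' : ∀ x ∈ Set.Icc ε₂ M₂, DifferentiableAt ℝ (deriv φ) x := fun x hx => hφ' x (hpos hx)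
  refine ⟨half_mul_sum_sum_sq_le_bregmanD hX hY (convex_Icc _ _) hd hd'
    (fun x hx => (hφ'' x hx).1) hXspec hYspec, ?_⟩
  calc bregmanD φ X Y ≤ cu / 2 * ∑ i, ∑ j, (X - Y) i j ^ 2 :=
        bregmanD_le_half_mul_sum_sum_sq hX hY (convex_Icc _ _) hd hd'
          (fun x hx => (hφ'' x hx).2) hXspec hYspec
    _ ≤ cu * ∑ i, ∑ j, (X - Y) i j ^ 2 := by gcongr; linarith

/-- **Lemma 9 of Cai–Zhou (Bregman divergences are equivalent to the squared Frobenius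
norm).**  If all eigenvalues of the symmetric matrices `X` and `Y` lie in `[ε₂, M₂]` with
`0 < ε₂ < M₂`, then there are constants `c₂ > c₁ > 0` (depending only on `ε₂, M₂` and the
second-derivative bounds `c_L ≤ φ'' ≤ c_u` of the class `Ψ` on `[ε₂, M₂]`) such that
`c₁ |||X - Y|||_F² ≤ D_φ(X, Y) ≤ c₂ |||X - Y|||_F²` for every `φ ∈ Ψ`. -/
theorem bregman_equiv_frobenius (ε₂ M₂ : ℝ) (hε₂ : 0 < ε₂) (hεM : ε₂ < M₂)
    (cL cu : ℝ) (hcL : 0 < cL) (hcLu : cL ≤ cu) :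
    ∃ c₁ c₂ : ℝ, 0 < c₁ ∧ c₁ < c₂ ∧
      ∀ (p : ℕ) (X Y : Matrix (Fin p) (Fin p) ℝ)
        (hX : X.IsHermitian) (hY : Y.IsHermitian),
        (∀ i, hX.eigenvalues i ∈ Set.Icc ε₂ M₂) →
        (∀ i, hY.eigenvalues i ∈ Set.Icc ε₂ M₂) →
        ∀ φ : ℝ → ℝ,
          (∀ x ∈ Set.Ioi (0 : ℝ), DifferentiableAt ℝ φ x) →
          (∀ x ∈ Set.Ioi (0 : ℝ), DifferentiableAt ℝ (deriv φ) x) →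
          StrictConvexOn ℝ (Set.Ioi (0 : ℝ)) φ →
          (∃ C r : ℝ, 0 < C ∧ ∀ x : ℝ, 0 < x → |φ x| ≤ C * x ^ r) →
          (∀ x ∈ Set.Icc ε₂ M₂, cL ≤ deriv (deriv φ) x ∧ deriv (deriv φ) x ≤ cu) →
          c₁ * (∑ i, ∑ j, ((X - Y) i j) ^ 2) ≤ bregmanD φ X Y ∧
            bregmanD φ X Y ≤ c₂ * (∑ i, ∑ j, ((X - Y) i j) ^ 2) :=
  bregman_equiv_frobenius_general ε₂ M₂ hε₂ cL cu hcL hcLu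

end
end

section
/- Let Σ̂ be a p×p real symmetric matrix with spectral decomposition Σ̂ = Σ_{i=1}^p λ̂_i v_i v_i^T, and define its positive part Σ̂^+ = Σ_{i=1}^p max(λ̂_i, 0) v_i v_i^T. Then for any p×p symmetric positive semidefinite matrix Σ, |||Σ̂^+ − Σ||| ≤ 2 |||Σ̂ − Σ|||, where |||·||| is the spectral norm. -/
/-!
Since `Σ` is positive semidefinite, a unit eigenvector `v` of `Σ̂` with eigenvalue `λ̂` satisfies
`-λ̂ ≤ vᵀ (Σ - Σ̂) v ≤ |||Σ̂ - Σ|||`. Hence `Σ̂⁺ - Σ̂ = Σ_i max(-λ̂_i, 0) v_i v_iᵀ`, whose spectral norm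
is `max_i max(-λ̂_i, 0)` by unitary invariance, is at most `|||Σ̂ - Σ|||`, and the triangle
inequality through `Σ̂` gives the factor `2`.
-/

open scoped ENNReal BigOperators

noncomputable section

open Matrix WithLp
open scoped Matrix.Norms.L2Operator RealInnerProductSpace

lemma vecLwNorm_two_eq_norm {p : ℕ} (x : Fin p → ℝ) :
    vecLwNorm 2 x = ‖toLp 2 x‖ := by
  rw [vecLwNorm, if_neg ENNReal.ofNat_ne_top, PiLp.norm_eq_sum (by norm_num)]
  simp only [Real.norm_eq_abs]

lemma specNorm_eq_l2_opNorm {p : ℕ} (A : Matrix (Fin p) (Fin p) ℝ) : specNorm A = ‖A‖ := by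
  rw [cstar_norm_def, ← ContinuousLinearMap.sSup_sphere_eq_norm, specNorm, lwOpNorm]
  congr 1
  ext r
  simp only [vecLwNorm_two_eq_norm, Set.mem_ofPred_eq, Set.mem_image, mem_sphere_zero_iff_norm]
  constructor
  · rintro ⟨x, hx, rfl⟩
    exact ⟨toLp 2 x, hx, rfl⟩
  · rintro ⟨y, hy, rfl⟩
    exact ⟨ofLp y, hy, rfl⟩

lemma dotProduct_mulVec_le_l2_opNorm {n : Type*} [Fintype n] [DecidableEq n]
    (M : Matrix n n ℝ) (x : EuclideanSpace ℝ n) (hx : ‖x‖ = 1) :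
    ofLp x ⬝ᵥ M *ᵥ ofLp x ≤ ‖M‖ := by
  rw [← inner_toEuclideanCLM]
  calc ⟪x, toEuclideanCLM (𝕜 := ℝ) M x⟫
      ≤ ‖x‖ * ‖toEuclideanCLM (𝕜 := ℝ) M x‖ := real_inner_le_norm _ _
    _ ≤ ‖M‖ := by
      rw [← l2_opNorm_toEuclideanCLM]
      simpa [hx] using (toEuclideanCLM (𝕜 := ℝ) M).le_opNorm x

lemma Matrix.IsHermitian.neg_eigenvalues_le_l2_opNorm_sub {n : Type*} [Fintype n] [DecidableEq n]
    {A S : Matrix n n ℝ} (hA : A.IsHermitian) (hS : S.PosSemidef) (i : n) :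
    -hA.eigenvalues i ≤ ‖A - S‖ := by
  set v := hA.eigenvectorBasis i
  have hv : ‖v‖ = 1 := hA.eigenvectorBasis.orthonormal.1 i
  have hAv : ofLp v ⬝ᵥ A *ᵥ ofLp v = hA.eigenvalues i := by
    have hvv : ofLp v ⬝ᵥ ofLp v = ‖v‖ ^ 2 := by
      rw [← real_inner_self_eq_norm_sq, EuclideanSpace.inner_eq_star_dotProduct, star_trivial]
    rw [hA.mulVec_eigenvectorBasis, dotProduct_smul, hvv, hv, one_pow, smul_eq_mul, mul_one]
  have hSv : 0 ≤ ofLp v ⬝ᵥ S *ᵥ ofLp v := by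
    simpa using hS.dotProduct_mulVec_nonneg (ofLp v)
  have := dotProduct_mulVec_le_l2_opNorm (S - A) v hv
  rw [sub_mulVec, dotProduct_sub, hAv, norm_sub_rev] at this
  linarith

lemma matApply_sub {p : ℕ} {A : Matrix (Fin p) (Fin p) ℝ} (hA : A.IsHermitian) (f g : ℝ → ℝ) :
    matApply f hA - matApply g hA = matApply (fun t => f t - g t) hA := by
  simp only [matApply, ← sub_mul, ← mul_sub, diagonal_sub]

lemma matApply_id_s18 {p : ℕ} {A : Matrix (Fin p) (Fin p) ℝ} (hA : A.IsHermitian) :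
    matApply id hA = A := by
  conv_rhs => rw [hA.spectral_theorem]
  simp [matApply, Unitary.conjStarAlgAut_apply]

lemma l2_opNorm_matApply {p : ℕ} {A : Matrix (Fin p) (Fin p) ℝ} (hA : A.IsHermitian) (g : ℝ → ℝ) :
    ‖matApply g hA‖ = ‖fun i => g (hA.eigenvalues i)‖ := by
  rw [matApply, ← Unitary.coe_star, CStarRing.norm_mul_coe_unitary,
    CStarRing.norm_coe_unitary_mul, l2_opNorm_diagonal]

lemma Matrix.IsHermitian.l2_opNorm_matApply_posPart_sub_self_le {p : ℕ}
    {A S : Matrix (Fin p) (Fin p) ℝ} (hA : A.IsHermitian) (hS : S.PosSemidef) :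
    ‖matApply (fun t => max t 0) hA - A‖ ≤ ‖A - S‖ := by
  have hdiff : matApply (fun t => max t 0) hA - A = matApply (fun t => max t 0 - t) hA := by
    conv_lhs => arg 2; rw [← matApply_id_s18 hA]
    exact matApply_sub hA _ _
  rw [hdiff, l2_opNorm_matApply]
  refine (pi_norm_le_iff_of_nonneg (norm_nonneg _)).2 fun i => ?_
  rw [Real.norm_eq_abs, abs_of_nonneg (sub_nonneg.2 (le_max_left _ _)), ← max_sub_sub_right,
    sub_self, zero_sub]
  exact max_le (norm_nonneg _) (hA.neg_eigenvalues_le_l2_opNorm_sub hS i)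

/-- **The positive-part estimator.**  If `Σ̂⁺ = Σ_i max(λ̂_i, 0) v_i v_iᵀ` is the positive
part of a symmetric matrix `Σ̂ = Σ_i λ̂_i v_i v_iᵀ`, then for every positive semidefinite
`Σ`, `|||Σ̂⁺ - Σ||| ≤ 2 |||Σ̂ - Σ|||`. -/
theorem posPart_spectral_norm_le (p : ℕ) (A : Matrix (Fin p) (Fin p) ℝ)
    (hA : A.IsHermitian) (S : Matrix (Fin p) (Fin p) ℝ) (hS : S.PosSemidef) :
    specNorm (matApply (fun t => max t 0) hA - S) ≤ 2 * specNorm (A - S) := by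
  rw [specNorm_eq_l2_opNorm, specNorm_eq_l2_opNorm]
  calc ‖matApply (fun t => max t 0) hA - S‖
      ≤ ‖matApply (fun t => max t 0) hA - A‖ + ‖A - S‖ := norm_sub_le_norm_sub_add_norm_sub _ _ _
    _ ≤ 2 * ‖A - S‖ := by
      linarith [hA.l2_opNorm_matApply_posPart_sub_self_le hS]

end
end

section
/- Let m, k, j be integers with 0 ≤ j ≤ k and m ≥ 2k, and with k < m − k (so that k^2/(m − k) is well defined and positive). Then the hypergeometric probability satisfies C(k, j) · C(m − k, k − j) / C(m, k) ≤ ( k^2 / (m − k) )^j, where C(a, b) denotes the binomial coefficient a choose b. -/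
/-!
Bound the two binomial factors separately: `C(k, j) ≤ k ^ j` and
`C(m - k, k - j) ≤ C(m - j, k - j)`. Removing one element from both the ground set and the
chosen set, `C(n, r) / C(n + 1, r + 1) = (r + 1) / (n + 1)`, so `j` such removals give
`C(m - j, k - j) / C(m, k) ≤ (k / (m - k)) ^ j`. Together the hypergeometric probability is at
most `k ^ j · (k / (m - k)) ^ j`.
-/

namespace Nat

theorem choose_sub_mul_pow_le_pow_mul_choose {m k j : ℕ} (hj : j ≤ k) (hk : k ≤ m) :
    (m - j).choose (k - j) * (m - k) ^ j ≤ k ^ j * m.choose k := by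
  induction j with
  | zero => simp
  | succ j ih =>
    obtain ⟨n, hn⟩ : ∃ n, m - j = n + 1 := ⟨m - j - 1, by omega⟩
    obtain ⟨r, hr⟩ : ∃ r, k - j = r + 1 := ⟨k - j - 1, by omega⟩
    have hshift : m - (j + 1) = n ∧ k - (j + 1) = r := by omega
    rw [hshift.1, hshift.2]
    calc n.choose r * (m - k) ^ (j + 1)
        = n.choose r * (m - k) * (m - k) ^ j := by ring
      _ ≤ n.choose r * (n + 1) * (m - k) ^ j := by gcongr; omega
      _ = (r + 1) * ((n + 1).choose (r + 1) * (m - k) ^ j) := by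
          rw [mul_comm _ (n + 1), add_one_mul_choose_eq]; ring
      _ ≤ k * (k ^ j * m.choose k) := by
          rw [← hn, ← hr]
          exact Nat.mul_le_mul (by omega) (ih (by omega))
      _ = k ^ (j + 1) * m.choose k := by ring

theorem choose_mul_choose_mul_pow_le {m k j : ℕ} (hj : j ≤ k) (hk : k ≤ m) :
    k.choose j * (m - k).choose (k - j) * (m - k) ^ j ≤ (k ^ 2) ^ j * m.choose k :=
  calc k.choose j * (m - k).choose (k - j) * (m - k) ^ j
      ≤ k ^ j * ((m - j).choose (k - j) * (m - k) ^ j) := by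
        rw [mul_assoc]
        exact Nat.mul_le_mul (choose_le_pow k j)
          (Nat.mul_le_mul_right _ (choose_le_choose _ (by omega)))
    _ ≤ k ^ j * (k ^ j * m.choose k) :=
        Nat.mul_le_mul_left _ (choose_sub_mul_pow_le_pow_mul_choose hj hk)
    _ = (k ^ 2) ^ j * m.choose k := by ring

end Nat

theorem hypergeometric_prob_le_general (m k j : ℕ) (hj : j ≤ k) (hkm : k < m - k) :
    ((Nat.choose k j : ℝ) * (Nat.choose (m - k) (k - j) : ℝ)) / (Nat.choose m k : ℝ) ≤
      ((k : ℝ) ^ 2 / ((m : ℝ) - (k : ℝ))) ^ j := by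
  have hk : k ≤ m := by omega
  have hmk : (0 : ℝ) < ((m - k : ℕ) : ℝ) := by exact_mod_cast (by omega : 0 < m - k)
  have hchoose : (0 : ℝ) < m.choose k := by exact_mod_cast Nat.choose_pos hk
  rw [← Nat.cast_sub hk, div_pow, div_le_div_iff₀ hchoose (pow_pos hmk j)]
  exact_mod_cast Nat.choose_mul_choose_mul_pow_le hj hk

/-- **Hypergeometric tail bound.**  For integers `0 ≤ j ≤ k` and `m ≥ 2k` with `k < m - k`,
the hypergeometric probability `C(k,j) C(m-k, k-j) / C(m,k)` is at most `(k² / (m-k))^j`. -/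
theorem hypergeometric_prob_le (m k j : ℕ) (hj : j ≤ k) (hm : 2 * k ≤ m) (hkm : k < m - k) :
    ((Nat.choose k j : ℝ) * (Nat.choose (m - k) (k - j) : ℝ)) / (Nat.choose m k : ℝ) ≤
      ((k : ℝ) ^ 2 / ((m : ℝ) - (k : ℝ))) ^ j :=
  hypergeometric_prob_le_general m k j hj hkm
end
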